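/- arXiv:1504.05913 — 2 statements merged into one kernel-verified Lean document; each statement's English description precedes it below -/
import Mathlib

section
/- For a quasi-trivial parameter δ on ℝ^(2D), the finite coordinate transformation it generates is an exact translation: for every point X ∈ ℝ^(2D), the curve x(λ) := X − λ·δ(X) satisfies x(0) = X and x'(λ) = −δ(x(λ)) for all λ ∈ ℝ (i.e. e^{−λ δ^P ∂_P} X = X − λ δ(X)). -/
open scoped BigOperators

/-- Index set of the doubled space ℝ^(2D). -/
abbrev DoubledIdx (D : ℕ) := Fin D ⊕ Fin D

/-- The doubled space ℝ^(2D). -/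
abbrev DoubledSpace (D : ℕ) := DoubledIdx D → ℝ

/-- Partial derivative ∂_N f at x. -/
noncomputable def pd {D : ℕ} (f : DoubledSpace D → ℝ) (N : DoubledIdx D)
    (x : DoubledSpace D) : ℝ :=
  fderiv ℝ f x (Pi.single N 1)

/-- The constant O(D,D) metric η. -/
def eta (D : ℕ) : DoubledIdx D → DoubledIdx D → ℝ
  | Sum.inl i, Sum.inr j => if i = j then 1 else 0
  | Sum.inr i, Sum.inl j => if i = j then 1 else 0
  | _, _ => 0

/-- Raised-index partial derivative ∂^M f := Σ_N η^{MN} ∂_N f. -/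
noncomputable def pdUp {D : ℕ} (f : DoubledSpace D → ℝ) (M : DoubledIdx D)
    (x : DoubledSpace D) : ℝ :=
  ∑ N, eta D M N * pd f N x

/-- A constrained function: smooth and depending only on the first (inl) block. -/
def IsConstrained {D : ℕ} (f : DoubledSpace D → ℝ) : Prop :=
  ContDiff ℝ (⊤ : ℕ∞) f ∧
    ∀ x y : DoubledSpace D, (∀ i, x (Sum.inl i) = y (Sum.inl i)) → f x = f y

/-- A parameter (generalized vector field) on the doubled space, components ξ^M. -/
abbrev Param (D : ℕ) := DoubledIdx D → DoubledSpace D → ℝ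

/-- A constrained parameter: all components constrained. -/
def IsConstrainedParam {D : ℕ} (ξ : Param D) : Prop := ∀ M, IsConstrained (ξ M)

/-- A quasi-trivial parameter: δ^M = Σ_i ρ_i ∂^M σ_i. -/
def IsQuasiTrivial {D : ℕ} (δ : Param D) : Prop :=
  ∃ (r : ℕ) (ρ σ : Fin r → (DoubledSpace D → ℝ)),
    (∀ i, IsConstrained (ρ i)) ∧ (∀ i, IsConstrained (σ i)) ∧
    ∀ M x, δ M x = ∑ i, ρ i x * pdUp (σ i) M x

/-- ∂^M ξ_P := Σ_{Q,R} η^{MQ} η_{PR} ∂_Q ξ^R. -/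
noncomputable def pdUpLow {D : ℕ} (ξ : Param D) (M P : DoubledIdx D)
    (x : DoubledSpace D) : ℝ :=
  ∑ Q, ∑ R, eta D M Q * eta D P R * pd (ξ R) Q x

/-- Generalized Lie derivative (L̂_ξ V)_M. -/
noncomputable def glie {D : ℕ} (ξ V : Param D) : Param D :=
  fun M x => (∑ P, ξ P x * pd (V M) P x)
    + ∑ K, (pd (ξ K) M x - pdUpLow ξ K M x) * V K x

/-- η-transpose of a matrix: t(X)_M{}^N := Σ_{P,Q} η_{MP} η^{NQ} X_Q{}^P. -/
def etaT {D : ℕ} (X : Matrix (DoubledIdx D) (DoubledIdx D) ℝ) :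
    Matrix (DoubledIdx D) (DoubledIdx D) ℝ :=
  Matrix.of fun M N => ∑ P, ∑ Q, eta D M P * eta D N Q * X Q P

/-- The C-bracket of two parameters. -/
noncomputable def cbracket {D : ℕ} (ξ₁ ξ₂ : Param D) : Param D :=
  fun M x => (∑ P, ξ₁ P x * pd (ξ₂ M) P x) - (∑ P, ξ₂ P x * pd (ξ₁ M) P x)
    - (1/2) * ∑ P, (ξ₁ P x * pdUpLow ξ₂ M P x - ξ₂ P x * pdUpLow ξ₁ M P x)

/-- Directional derivative (ξ·∂)f. -/
noncomputable def xid {D : ℕ} (ξ : Param D) (f : DoubledSpace D → ℝ)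
    (x : DoubledSpace D) : ℝ :=
  ∑ P, ξ P x * pd f P x

/-- Iterated directional derivative (ξ·∂)^n f. -/
noncomputable def xidIter {D : ℕ} (ξ : Param D) : ℕ → (DoubledSpace D → ℝ) →
    DoubledSpace D → ℝ
  | 0, f => f
  | n+1, f => xid ξ (xidIter ξ n f)

/-- Projection onto the inl block, as a continuous linear map. -/
noncomputable def projL (D : ℕ) : DoubledSpace D →L[ℝ] DoubledSpace D :=
  ContinuousLinearMap.pi (fun M =>
    Sum.elim (fun i => ContinuousLinearMap.proj (Sum.inl i)) (fun _ => 0) M)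

@[simp] lemma projL_apply_inl {D : ℕ} (x : DoubledSpace D) (i : Fin D) :
    projL D x (Sum.inl i) = x (Sum.inl i) := rfl

@[simp] lemma projL_apply_inr {D : ℕ} (x : DoubledSpace D) (i : Fin D) :
    projL D x (Sum.inr i) = 0 := rfl

lemma projL_eq_of_agree {D : ℕ} {x y : DoubledSpace D}
    (h : ∀ i, x (Sum.inl i) = y (Sum.inl i)) : projL D x = projL D y := by
  funext M
  cases M with
  | inl i => simpa using h i
  | inr i => rfl

lemma constrained_comp_projL {D : ℕ} {f : DoubledSpace D → ℝ}
    (hf : IsConstrained f) : f ∘ projL D = f := by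
  funext x
  exact hf.2 _ _ (fun i => rfl)

lemma fderiv_constrained {D : ℕ} {f : DoubledSpace D → ℝ}
    (hf : IsConstrained f) (x : DoubledSpace D) :
    fderiv ℝ f x = (fderiv ℝ f (projL D x)).comp (projL D) := by
  have hdiff : DifferentiableAt ℝ f (projL D x) :=
    (hf.1.differentiable (by simp)) _
  have := (hdiff.hasFDerivAt).comp x (projL D).hasFDerivAt
  rw [constrained_comp_projL hf] at this
  exact this.fderiv

lemma pd_congr {D : ℕ} {f : DoubledSpace D → ℝ} (hf : IsConstrained f)
    {x y : DoubledSpace D} (h : ∀ i, x (Sum.inl i) = y (Sum.inl i))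
    (N : DoubledIdx D) : pd f N x = pd f N y := by
  unfold pd
  rw [fderiv_constrained hf x, fderiv_constrained hf y, projL_eq_of_agree h]

lemma pd_inr {D : ℕ} {f : DoubledSpace D → ℝ} (hf : IsConstrained f)
    (j : Fin D) (x : DoubledSpace D) : pd f (Sum.inr j) x = 0 := by
  unfold pd
  rw [fderiv_constrained hf x]
  have : projL D (Pi.single (Sum.inr j) (1:ℝ)) = 0 := by
    funext M
    cases M with
    | inl i => simp [Pi.single_apply]
    | inr i => rfl
  simp [ContinuousLinearMap.comp_apply, this]

/-- The finite coordinate transformation generated by a quasi-trivial parameter is an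
exact translation: the straight line x(λ) = X − λ·δ(X) is the integral curve of −δ. -/
theorem stmt_8 {D : ℕ} (δ : Param D) (hδ : IsQuasiTrivial δ)
    (X : DoubledSpace D) (c : ℝ → DoubledSpace D)
    (hc : ∀ lam : ℝ, c lam = X - lam • (fun M => δ M X)) :
    c 0 = X ∧ ∀ lam : ℝ, HasDerivAt c (-(fun M => δ M (c lam))) lam := by
  obtain ⟨r, ρ, σ, hρ, hσ, hδeq⟩ := hδ
  -- δ vanishes on inl components
  have hδinl : ∀ (i : Fin D) (x : DoubledSpace D), δ (Sum.inl i) x = 0 := by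
    intro i x
    rw [hδeq]
    apply Finset.sum_eq_zero
    intro k _
    have : pdUp (σ k) (Sum.inl i) x = 0 := by
      unfold pdUp
      apply Finset.sum_eq_zero
      intro N _
      cases N with
      | inl j => simp [eta]
      | inr j => rw [pd_inr (hσ k) j x]; ring
    rw [this]; ring
  -- δ depends only on the inl block
  have hδcongr : ∀ (M : DoubledIdx D) (x y : DoubledSpace D),
      (∀ i, x (Sum.inl i) = y (Sum.inl i)) → δ M x = δ M y := by
    intro M x y h
    rw [hδeq, hδeq]
    apply Finset.sum_congr rfl
    intro k _
    have h1 : ρ k x = ρ k y := (hρ k).2 x y h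
    have h2 : pdUp (σ k) M x = pdUp (σ k) M y := by
      unfold pdUp
      exact Finset.sum_congr rfl fun N _ => by rw [pd_congr (hσ k) h N]
    rw [h1, h2]
  -- c lam agrees with X on inl components
  have hagree : ∀ lam : ℝ, ∀ i, c lam (Sum.inl i) = X (Sum.inl i) := by
    intro lam i
    rw [hc]
    simp [hδinl i X]
  have hδc : ∀ lam : ℝ, (fun M => δ M (c lam)) = (fun M => δ M X) := by
    intro lam
    funext M
    exact hδcongr M _ _ (hagree lam)
  constructor
  · rw [hc 0]; simp
  · intro lam
    have hcfun : c = fun l : ℝ => X - l • (fun M => δ M X) := funext hc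
    rw [hδc lam, hcfun]
    have h1 : HasDerivAt (fun l : ℝ => l • (fun M => δ M X)) (fun M => δ M X) lam := by
      simpa using (hasDerivAt_id lam).smul_const (fun M => δ M X)
    have := (hasDerivAt_const lam X).sub h1
    simp at this; exact this
end

section
/- For a quasi-trivial parameter δ on ℝ^(2D) with b := ∂δ (the matrix b_M{}^N = ∂_M δ^N), at every point: (1 − b)(1 + b) = 1 (so B := (1 − b)⁻¹ = 1 + b and t(B)⁻¹ = 1 − t(b)), and ½( B·t(B)⁻¹ + t(B)⁻¹·B ) = 1 + b − t(b), where t denotes the η-transpose. That is, the matrix F of the finite generalized coordinate transformation generated by δ equals the matrix G(δ) = 1 + b − t(b) obtained by exponentiating the generalized Lie derivative. -/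
open scoped BigOperators

section Aux
variable {D : ℕ}

lemma contDiff_pd {f : DoubledSpace D → ℝ} (hf : ContDiff ℝ (⊤ : ℕ∞) f) (M : DoubledIdx D) :
    ContDiff ℝ (⊤ : ℕ∞) (fun y => pd f M y) := by
  have h := (hf.fderiv_right (m := (⊤ : ℕ∞)) (by simp)).clm_apply (contDiff_const (c := (Pi.single M 1 : DoubledSpace D)))
  exact h

lemma pd_sum {ι : Type} [Fintype ι] {x : DoubledSpace D} (g : ι → DoubledSpace D → ℝ) (M : DoubledIdx D)
    (hg : ∀ i, DifferentiableAt ℝ (g i) x) :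
    pd (fun y => ∑ i, g i y) M x = ∑ i, pd (g i) M x := by
  unfold pd
  rw [fderiv_fun_sum (fun i _ => hg i)]
  simp

lemma pd_const_mul {x : DoubledSpace D} (c : ℝ) (g : DoubledSpace D → ℝ) (M : DoubledIdx D)
    (hg : DifferentiableAt ℝ g x) :
    pd (fun y => c * g y) M x = c * pd g M x := by
  unfold pd
  rw [fderiv_const_mul hg]
  simp

lemma pd_mul {x : DoubledSpace D} (g h : DoubledSpace D → ℝ) (M : DoubledIdx D)
    (hg : DifferentiableAt ℝ g x) (hh : DifferentiableAt ℝ h x) :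
    pd (fun y => g y * h y) M x = g x * pd h M x + h x * pd g M x := by
  unfold pd
  rw [fderiv_fun_mul hg hh]
  simp

lemma pd_pd_comm {f : DoubledSpace D → ℝ} (hf : ContDiff ℝ (⊤ : ℕ∞) f) (R M : DoubledIdx D)
    (x : DoubledSpace D) :
    pd (fun y => pd f R y) M x = pd (fun y => pd f M y) R x := by
  have hsym := (hf.contDiffAt (x := x)).isSymmSndFDerivAt (by rw [minSmoothness_of_isRCLikeNormedField]; exact WithTop.coe_le_coe.mpr le_top)
  have key : ∀ V W : DoubledIdx D, pd (fun y => pd f V y) W x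
      = fderiv ℝ (fderiv ℝ f) x (Pi.single W 1) (Pi.single V 1) := by
    intro V W
    unfold pd
    have hc : DifferentiableAt ℝ (fderiv ℝ f) x :=
      ((hf.fderiv_right (m := (⊤ : ℕ∞)) (by simp)).differentiable (by simp)).differentiableAt
    rw [fderiv_clm_apply hc (differentiableAt_const _)]
    simp
  rw [key, key]
  exact hsym _ _

end Aux
section Aux2
variable {D : ℕ}

lemma eta_comm (M N : DoubledIdx D) : eta D M N = eta D N M := by
  cases M <;> cases N <;> simp [eta, eq_comm]

lemma pdUp_inl (f : DoubledSpace D → ℝ) (i : Fin D) (x : DoubledSpace D) :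
    pdUp f (Sum.inl i) x = pd f (Sum.inr i) x := by
  simp [pdUp, eta, Fintype.sum_sum_type]

lemma pdUp_inr (f : DoubledSpace D → ℝ) (i : Fin D) (x : DoubledSpace D) :
    pdUp f (Sum.inr i) x = pd f (Sum.inl i) x := by
  simp [pdUp, eta, Fintype.sum_sum_type]

lemma eta_contract_pdUp (f : DoubledSpace D → ℝ) (Q : DoubledIdx D) (x : DoubledSpace D) :
    ∑ P, eta D Q P * pdUp f P x = pd f Q x := by
  cases Q <;>
    simp [Fintype.sum_sum_type, eta, pdUp_inl, pdUp_inr]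

/-- smooth and flat in the `inr` directions -/
def GoodFn (f : DoubledSpace D → ℝ) : Prop :=
  ContDiff ℝ (⊤ : ℕ∞) f ∧ ∀ (i : Fin D) (x : DoubledSpace D), pd f (Sum.inr i) x = 0

lemma IsConstrained.good {f : DoubledSpace D → ℝ} (hf : IsConstrained f) : GoodFn f := by
  refine ⟨hf.1, fun i x => ?_⟩
  have hdiff : DifferentiableAt ℝ f x := (hf.1.differentiable (by simp)).differentiableAt
  have h1 : pd f (Sum.inr i) x = lineDeriv ℝ f x ((Pi.single (Sum.inr i) 1 : DoubledSpace D)) :=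
    (hdiff.lineDeriv_eq_fderiv).symm
  rw [h1, lineDeriv]
  have h2 : (fun t : ℝ => f (x + t • (Pi.single (Sum.inr i) 1 : DoubledSpace D))) = fun _ => f x := by
    funext t
    exact hf.2 _ _ (fun j => by simp [Pi.single_apply])
  rw [h2, deriv_const]

lemma GoodFn.pdFn {f : DoubledSpace D → ℝ} (hf : GoodFn f) (M : DoubledIdx D) :
    GoodFn (fun y => pd f M y) := by
  refine ⟨contDiff_pd hf.1 M, fun i x => ?_⟩
  rw [← pd_pd_comm hf.1 (Sum.inr i) M x]
  have h0 : (fun y => pd f (Sum.inr i) y) = fun _ => (0 : ℝ) := funext fun y => hf.2 i y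
  rw [h0]
  simp [pd]

lemma contDiff_pdUp {f : DoubledSpace D → ℝ} (hf : ContDiff ℝ (⊤ : ℕ∞) f) (N : DoubledIdx D) :
    ContDiff ℝ (⊤ : ℕ∞) (fun y => pdUp f N y) := by
  have : (fun y => pdUp f N y) = fun y => ∑ R, eta D N R * pd f R y := rfl
  rw [this]
  exact ContDiff.sum fun R _ => contDiff_const.mul (contDiff_pd hf R)

lemma GoodFn.pdUpFn {f : DoubledSpace D → ℝ} (hf : GoodFn f) (N : DoubledIdx D) :
    GoodFn (fun y => pdUp f N y) := by
  refine ⟨contDiff_pdUp hf.1 N, fun i x => ?_⟩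
  have h1 : (fun y => pdUp f N y) = fun y => ∑ R, eta D N R * pd f R y := rfl
  rw [h1, pd_sum _ _ (fun R =>
    ((contDiff_const.mul (contDiff_pd hf.1 R)).differentiable (by simp)).differentiableAt)]
  refine Finset.sum_eq_zero fun R _ => ?_
  rw [pd_const_mul _ _ _ (((contDiff_pd hf.1 R).differentiable (by simp)).differentiableAt)]
  rw [(hf.pdFn R).2 i x, mul_zero]

lemma orth {A B : DoubledSpace D → ℝ} (hA : GoodFn A) (hB : GoodFn B) (x : DoubledSpace D) :
    ∑ P, pdUp A P x * pd B P x = 0 := by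
  rw [Fintype.sum_sum_type]
  have h1 : ∀ i : Fin D, pdUp A (Sum.inl i) x = 0 := fun i => by
    rw [pdUp_inl]; exact hA.2 i x
  simp [h1, hB.2]

lemma pd_pdUp_comm {f : DoubledSpace D → ℝ} (hf : ContDiff ℝ (⊤ : ℕ∞) f) (P M : DoubledIdx D)
    (x : DoubledSpace D) :
    pd (fun y => pdUp f P y) M x = pdUp (fun y => pd f M y) P x := by
  have h1 : (fun y => pdUp f P y) = fun y => ∑ R, eta D P R * pd f R y := rfl
  rw [h1, pd_sum _ _ (fun R =>
    ((contDiff_const.mul (contDiff_pd hf R)).differentiable (by simp)).differentiableAt)]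
  unfold pdUp
  refine Finset.sum_congr rfl fun R _ => ?_
  rw [pd_const_mul _ _ _ (((contDiff_pd hf R).differentiable (by simp)).differentiableAt),
    pd_pd_comm hf R M x]

end Aux2
section Aux3
variable {D : ℕ}

def LowForm (x : DoubledSpace D) (v : DoubledIdx D → ℝ) : Prop :=
  ∃ (r : ℕ) (c : Fin r → ℝ) (B : Fin r → DoubledSpace D → ℝ),
    (∀ j, GoodFn (B j)) ∧ ∀ P, v P = ∑ j, c j * pd (B j) P x

def UpForm (x : DoubledSpace D) (u : DoubledIdx D → ℝ) : Prop :=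
  ∃ (r : ℕ) (a : Fin r → ℝ) (A : Fin r → DoubledSpace D → ℝ),
    (∀ j, GoodFn (A j)) ∧ ∀ P, u P = ∑ j, a j * pdUp (A j) P x

lemma LowForm.single {x : DoubledSpace D} (c : ℝ) {B : DoubledSpace D → ℝ} (hB : GoodFn B) :
    LowForm x (fun P => c * pd B P x) :=
  ⟨1, fun _ => c, fun _ => B, fun _ => hB, fun P => by simp⟩

lemma UpForm.single {x : DoubledSpace D} (c : ℝ) {A : DoubledSpace D → ℝ} (hA : GoodFn A) :
    UpForm x (fun P => c * pdUp A P x) :=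
  ⟨1, fun _ => c, fun _ => A, fun _ => hA, fun P => by simp⟩

lemma LowForm.add {x : DoubledSpace D} {v₁ v₂ : DoubledIdx D → ℝ}
    (h₁ : LowForm x v₁) (h₂ : LowForm x v₂) : LowForm x (fun P => v₁ P + v₂ P) := by
  obtain ⟨r₁, c₁, B₁, hB₁, hv₁⟩ := h₁
  obtain ⟨r₂, c₂, B₂, hB₂, hv₂⟩ := h₂
  refine ⟨r₁ + r₂, Fin.append c₁ c₂, Fin.append B₁ B₂, ?_, ?_⟩
  · intro j
    refine Fin.addCases (fun i => ?_) (fun i => ?_) j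
    · rw [Fin.append_left]; exact hB₁ i
    · rw [Fin.append_right]; exact hB₂ i
  · intro P
    show v₁ P + v₂ P = _
    rw [hv₁ P, hv₂ P, Fin.sum_univ_add]
    simp [Fin.append_left, Fin.append_right]

lemma LowForm.zero {x : DoubledSpace D} : LowForm x (fun _ => 0) :=
  ⟨0, Fin.elim0, Fin.elim0, fun j => j.elim0, fun P => by simp⟩

lemma UpForm.add {x : DoubledSpace D} {v₁ v₂ : DoubledIdx D → ℝ}
    (h₁ : UpForm x v₁) (h₂ : UpForm x v₂) : UpForm x (fun P => v₁ P + v₂ P) := by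
  obtain ⟨r₁, c₁, B₁, hB₁, hv₁⟩ := h₁
  obtain ⟨r₂, c₂, B₂, hB₂, hv₂⟩ := h₂
  refine ⟨r₁ + r₂, Fin.append c₁ c₂, Fin.append B₁ B₂, ?_, ?_⟩
  · intro j
    refine Fin.addCases (fun i => ?_) (fun i => ?_) j
    · rw [Fin.append_left]; exact hB₁ i
    · rw [Fin.append_right]; exact hB₂ i
  · intro P
    show v₁ P + v₂ P = _
    rw [hv₁ P, hv₂ P, Fin.sum_univ_add]
    simp [Fin.append_left, Fin.append_right]

lemma UpForm.zero {x : DoubledSpace D} : UpForm x (fun _ => 0) :=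
  ⟨0, Fin.elim0, Fin.elim0, fun j => j.elim0, fun P => by simp⟩

lemma LowForm.sum {x : DoubledSpace D} {n : ℕ} (g : Fin n → DoubledIdx D → ℝ)
    (hg : ∀ i, LowForm x (g i)) : LowForm x (fun P => ∑ i, g i P) := by
  induction n with
  | zero => simpa using (LowForm.zero (x := x))
  | succ n ih =>
    have h := (hg 0).add (ih (fun i => g i.succ) (fun i => hg i.succ))
    simpa [Fin.sum_univ_succ] using h

lemma UpForm.sum {x : DoubledSpace D} {n : ℕ} (g : Fin n → DoubledIdx D → ℝ)
    (hg : ∀ i, UpForm x (g i)) : UpForm x (fun P => ∑ i, g i P) := by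
  induction n with
  | zero => simpa using (UpForm.zero (x := x))
  | succ n ih =>
    have h := (hg 0).add (ih (fun i => g i.succ) (fun i => hg i.succ))
    simpa [Fin.sum_univ_succ] using h

lemma form_orth {x : DoubledSpace D} {u v : DoubledIdx D → ℝ}
    (hu : UpForm x u) (hv : LowForm x v) : ∑ P, u P * v P = 0 := by
  obtain ⟨r, a, A, hA, hu⟩ := hu
  obtain ⟨s, c, B, hB, hv⟩ := hv
  calc ∑ P, u P * v P
      = ∑ P, ∑ j, ∑ i, (a j * c i) * (pdUp (A j) P x * pd (B i) P x) := by
        refine Finset.sum_congr rfl fun P _ => ?_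
        rw [hu P, hv P, Finset.sum_mul_sum]
        exact Finset.sum_congr rfl fun j _ => Finset.sum_congr rfl fun i _ => by ring
    _ = ∑ j, ∑ i, (a j * c i) * ∑ P, pdUp (A j) P x * pd (B i) P x := by
        rw [Finset.sum_comm]
        refine Finset.sum_congr rfl fun j _ => ?_
        rw [Finset.sum_comm]
        exact Finset.sum_congr rfl fun i _ => (Finset.mul_sum _ _ _).symm
    _ = 0 := by
        refine Finset.sum_eq_zero fun j _ => Finset.sum_eq_zero fun i _ => ?_
        rw [orth (hA j) (hB i), mul_zero]

end Aux3
section Aux4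
variable {D : ℕ}

lemma eta_contract_pdUp_two {x : DoubledSpace D} (Q : DoubledIdx D) (c₁ c₂ : ℝ)
    (A₁ A₂ : DoubledSpace D → ℝ) :
    ∑ P, eta D Q P * (c₁ * pdUp A₁ P x + c₂ * pdUp A₂ P x)
      = c₁ * pd A₁ Q x + c₂ * pd A₂ Q x := by
  have h : ∀ (c : ℝ) (A : DoubledSpace D → ℝ),
      ∑ P, eta D Q P * (c * pdUp A P x) = c * pd A Q x := by
    intro c A
    rw [← eta_contract_pdUp A Q x, Finset.mul_sum]
    exact Finset.sum_congr rfl fun P _ => by ring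
  calc ∑ P, eta D Q P * (c₁ * pdUp A₁ P x + c₂ * pdUp A₂ P x)
      = (∑ P, eta D Q P * (c₁ * pdUp A₁ P x)) + ∑ P, eta D Q P * (c₂ * pdUp A₂ P x) := by
        rw [← Finset.sum_add_distrib]
        exact Finset.sum_congr rfl fun P _ => by ring
    _ = _ := by rw [h, h]

lemma eta_contract_pd_two {x : DoubledSpace D} (Q : DoubledIdx D) (c₁ c₂ : ℝ)
    (B₁ B₂ : DoubledSpace D → ℝ) :
    ∑ P, eta D Q P * (c₁ * pd B₁ P x + c₂ * pd B₂ P x)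
      = c₁ * pdUp B₁ Q x + c₂ * pdUp B₂ Q x := by
  have h : ∀ (c : ℝ) (B : DoubledSpace D → ℝ),
      ∑ P, eta D Q P * (c * pd B P x) = c * pdUp B Q x := by
    intro c B
    unfold pdUp
    rw [Finset.mul_sum]
    exact Finset.sum_congr rfl fun P _ => by ring
  calc ∑ P, eta D Q P * (c₁ * pd B₁ P x + c₂ * pd B₂ P x)
      = (∑ P, eta D Q P * (c₁ * pd B₁ P x)) + ∑ P, eta D Q P * (c₂ * pd B₂ P x) := by
        rw [← Finset.sum_add_distrib]
        exact Finset.sum_congr rfl fun P _ => by ring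
    _ = _ := by rw [h, h]

variable {r : ℕ} {ρ σ : Fin r → DoubledSpace D → ℝ} {δ : Param D}

/-- product-rule expansion of ∂_M δ^N -/
lemma expand_pd (hρ : ∀ i, GoodFn (ρ i)) (hσ : ∀ i, GoodFn (σ i))
    (hd : ∀ M y, δ M y = ∑ i, ρ i y * pdUp (σ i) M y) (N M : DoubledIdx D)
    (x : DoubledSpace D) :
    pd (δ N) M x
      = ∑ i, (ρ i x * pd (fun y => pdUp (σ i) N y) M x
          + pdUp (σ i) N x * pd (ρ i) M x) := by
  have h1 : δ N = fun y => ∑ i, ρ i y * pdUp (σ i) N y := funext fun y => hd N y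
  rw [h1, pd_sum _ _ (fun i =>
    (((hρ i).1.mul (contDiff_pdUp (hσ i).1 N)).differentiable (by simp)).differentiableAt)]
  refine Finset.sum_congr rfl fun i _ => ?_
  rw [pd_mul _ _ _ (((hρ i).1.differentiable (by simp)).differentiableAt)
    (((contDiff_pdUp (hσ i).1 N).differentiable (by simp)).differentiableAt)]

/-- same, with the second derivative index commuted -/
lemma expand_pd' (hρ : ∀ i, GoodFn (ρ i)) (hσ : ∀ i, GoodFn (σ i))
    (hd : ∀ M y, δ M y = ∑ i, ρ i y * pdUp (σ i) M y) (N M : DoubledIdx D)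
    (x : DoubledSpace D) :
    pd (δ N) M x
      = ∑ i, (ρ i x * pdUp (fun y => pd (σ i) M y) N x
          + pd (ρ i) M x * pdUp (σ i) N x) := by
  rw [expand_pd hρ hσ hd N M x]
  refine Finset.sum_congr rfl fun i _ => ?_
  rw [pd_pdUp_comm (hσ i).1 N M x]
  ring

end Aux4
section Aux5
open Matrix
variable {D : ℕ}

/-- the η matrix -/
def Emat (D : ℕ) : Matrix (DoubledIdx D) (DoubledIdx D) ℝ := Matrix.of (eta D)

lemma Emat_mul_Emat : Emat D * Emat D = 1 := by
  ext M N
  rw [Matrix.mul_apply]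
  cases M <;> cases N <;>
    simp [Emat, eta, Fintype.sum_sum_type, Matrix.one_apply]

lemma etaT_eq (X : Matrix (DoubledIdx D) (DoubledIdx D) ℝ) :
    etaT X = Emat D * Xᵀ * Emat D := by
  ext M N
  simp only [etaT, Emat, Matrix.of_apply, Matrix.mul_apply, Matrix.transpose_apply,
    Finset.sum_mul]
  rw [Finset.sum_comm]
  refine Finset.sum_congr rfl fun P _ => Finset.sum_congr rfl fun Q _ => ?_
  rw [eta_comm P N]
  ring

end Aux5

open Matrix

/-- For a quasi-trivial parameter δ with b = ∂δ: (1−b)(1+b) = 1, so B = (1−b)⁻¹ = 1+b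
and t(B)⁻¹ = 1 − t(b), and the finite-transformation matrix
F = ½(B·t(B)⁻¹ + t(B)⁻¹·B) equals G(δ) = 1 + b − t(b). -/
theorem stmt_9 {D : ℕ} (δ : Param D) (hδ : IsQuasiTrivial δ)
    (x : DoubledSpace D) (b : Matrix (DoubledIdx D) (DoubledIdx D) ℝ)
    (hb : b = Matrix.of fun M N => pd (δ N) M x) :
    (1 - b) * (1 + b) = 1 ∧
    (1 - b)⁻¹ = 1 + b ∧
    (etaT ((1 - b)⁻¹))⁻¹ = 1 - etaT b ∧
    (1/2 : ℝ) • ((1 - b)⁻¹ * (etaT ((1 - b)⁻¹))⁻¹ + (etaT ((1 - b)⁻¹))⁻¹ * (1 - b)⁻¹)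
      = 1 + b - etaT b := by
  subst hb
  obtain ⟨r, ρ, σ, hρc, hσc, hd⟩ := hδ
  have Gρ : ∀ i, GoodFn (ρ i) := fun i => (hρc i).good
  have Gσ : ∀ i, GoodFn (σ i) := fun i => (hσc i).good
  set b : Matrix (DoubledIdx D) (DoubledIdx D) ℝ :=
    Matrix.of fun M N => pd (δ N) M x with hb
  -- the four form lemmas
  have F1 : ∀ N, LowForm x (fun P => pd (δ N) P x) := by
    intro N
    have hrep : (fun P => pd (δ N) P x)
        = fun P => ∑ i, (ρ i x * pd (fun y => pdUp (σ i) N y) P x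
            + pdUp (σ i) N x * pd (ρ i) P x) :=
      funext fun P => expand_pd Gρ Gσ hd N P x
    rw [hrep]
    exact LowForm.sum _ fun i =>
      (LowForm.single (ρ i x) ((Gσ i).pdUpFn N)).add
        (LowForm.single (pdUp (σ i) N x) (Gρ i))
  have F2 : ∀ M, UpForm x (fun P => pd (δ P) M x) := by
    intro M
    have hrep : (fun P => pd (δ P) M x)
        = fun P => ∑ i, (ρ i x * pdUp (fun y => pd (σ i) M y) P x
            + pd (ρ i) M x * pdUp (σ i) P x) :=
      funext fun P => expand_pd' Gρ Gσ hd P M x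
    rw [hrep]
    exact UpForm.sum _ fun i =>
      (UpForm.single (ρ i x) ((Gσ i).pdFn M)).add
        (UpForm.single (pd (ρ i) M x) (Gσ i))
  have F3 : ∀ M, LowForm x (fun Q => ∑ P, eta D Q P * pd (δ P) M x) := by
    intro M
    have hrep : (fun Q => ∑ P, eta D Q P * pd (δ P) M x)
        = fun Q => ∑ i, (ρ i x * pd (fun y => pd (σ i) M y) Q x
            + pd (ρ i) M x * pd (σ i) Q x) := by
      funext Q
      calc ∑ P, eta D Q P * pd (δ P) M x
          = ∑ P, ∑ i, eta D Q P * (ρ i x * pdUp (fun y => pd (σ i) M y) P x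
              + pd (ρ i) M x * pdUp (σ i) P x) := by
            refine Finset.sum_congr rfl fun P _ => ?_
            rw [expand_pd' Gρ Gσ hd P M x, Finset.mul_sum]
        _ = ∑ i, ∑ P, eta D Q P * (ρ i x * pdUp (fun y => pd (σ i) M y) P x
              + pd (ρ i) M x * pdUp (σ i) P x) := Finset.sum_comm
        _ = _ := Finset.sum_congr rfl fun i _ => eta_contract_pdUp_two Q _ _ _ _
    rw [hrep]
    exact LowForm.sum _ fun i =>
      (LowForm.single (ρ i x) ((Gσ i).pdFn M)).add
        (LowForm.single (pd (ρ i) M x) (Gσ i))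
  have F4 : ∀ M, UpForm x (fun Q => ∑ P, eta D Q P * pd (δ M) P x) := by
    intro M
    have hrep : (fun Q => ∑ P, eta D Q P * pd (δ M) P x)
        = fun Q => ∑ i, (ρ i x * pdUp (fun y => pdUp (σ i) M y) Q x
            + pdUp (σ i) M x * pdUp (ρ i) Q x) := by
      funext Q
      calc ∑ P, eta D Q P * pd (δ M) P x
          = ∑ P, ∑ i, eta D Q P * (ρ i x * pd (fun y => pdUp (σ i) M y) P x
              + pdUp (σ i) M x * pd (ρ i) P x) := by
            refine Finset.sum_congr rfl fun P _ => ?_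
            rw [expand_pd Gρ Gσ hd M P x, Finset.mul_sum]
        _ = ∑ i, ∑ P, eta D Q P * (ρ i x * pd (fun y => pdUp (σ i) M y) P x
              + pdUp (σ i) M x * pd (ρ i) P x) := Finset.sum_comm
        _ = _ := Finset.sum_congr rfl fun i _ => eta_contract_pd_two Q _ _ _ _
    rw [hrep]
    exact UpForm.sum _ fun i =>
      (UpForm.single (ρ i x) ((Gσ i).pdUpFn M)).add
        (UpForm.single (pdUp (σ i) M x) (Gρ i))
  -- the matrix vanishing facts
  have hbb : b * b = 0 := by
    ext M N
    rw [Matrix.mul_apply, Matrix.zero_apply]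
    exact form_orth (F2 M) (F1 N)
  have hbEb : b * Emat D * bᵀ = 0 := by
    ext M N
    rw [Matrix.zero_apply]
    have step : (b * Emat D * bᵀ) M N
        = ∑ Q, pd (δ Q) N x * ∑ P, eta D Q P * pd (δ P) M x := by
      simp only [Matrix.mul_apply, Matrix.transpose_apply, Matrix.of_apply, Emat, hb]
      refine Finset.sum_congr rfl fun Q _ => ?_
      have hin : (∑ P, pd (δ P) M x * eta D P Q) = ∑ P, eta D Q P * pd (δ P) M x :=
        Finset.sum_congr rfl fun P _ => by rw [eta_comm P Q]; ring
      rw [hin, mul_comm]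
    rw [step]
    exact form_orth (F2 N) (F3 M)
  have hbTEb : bᵀ * Emat D * b = 0 := by
    ext M N
    rw [Matrix.zero_apply]
    have step : (bᵀ * Emat D * b) M N
        = ∑ Q, (∑ P, eta D Q P * pd (δ M) P x) * pd (δ N) Q x := by
      simp only [Matrix.mul_apply, Matrix.transpose_apply, Matrix.of_apply, Emat, hb]
      refine Finset.sum_congr rfl fun Q _ => ?_
      have hin : (∑ P, pd (δ M) P x * eta D P Q) = ∑ P, eta D Q P * pd (δ M) P x :=
        Finset.sum_congr rfl fun P _ => by rw [eta_comm P Q]; ring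
      rw [hin]
    rw [step]
    exact form_orth (F4 M) (F1 N)
  have hEE : ∀ Y : Matrix (DoubledIdx D) (DoubledIdx D) ℝ, Emat D * (Emat D * Y) = Y := by
    intro Y
    rw [← Matrix.mul_assoc, Emat_mul_Emat, Matrix.one_mul]
  have h_tb_b : etaT b * b = 0 := by
    have : etaT b * b = Emat D * (bᵀ * Emat D * b) := by
      rw [etaT_eq]
      simp only [Matrix.mul_assoc]
    rw [this, hbTEb, Matrix.mul_zero]
  have h_b_tb : b * etaT b = 0 := by
    have : b * etaT b = b * Emat D * bᵀ * Emat D := by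
      rw [etaT_eq]
      simp only [Matrix.mul_assoc]
    rw [this, hbEb, Matrix.zero_mul]
  have h_tb_tb : etaT b * etaT b = 0 := by
    calc etaT b * etaT b
        = Emat D * (bᵀ * (Emat D * (Emat D * (bᵀ * Emat D)))) := by
          rw [etaT_eq]
          simp only [Matrix.mul_assoc]
      _ = Emat D * (bᵀ * (bᵀ * Emat D)) := by rw [hEE]
      _ = Emat D * (bᵀ * bᵀ * Emat D) := by rw [Matrix.mul_assoc]
      _ = 0 := by
          rw [← Matrix.transpose_mul, hbb, Matrix.transpose_zero, Matrix.zero_mul,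
            Matrix.mul_zero]
  -- assemble
  have h1 : (1 - b) * (1 + b) = 1 := by
    have e : (1 - b) * (1 + b) = 1 - b * b := by noncomm_ring
    rw [e, hbb, sub_zero]
  have h2 : (1 - b)⁻¹ = 1 + b := Matrix.inv_eq_right_inv h1
  have hT : etaT ((1 - b)⁻¹) = 1 + etaT b := by
    rw [h2, etaT_eq, etaT_eq, Matrix.transpose_add, Matrix.transpose_one, Matrix.mul_add,
      Matrix.mul_one, Matrix.add_mul, Emat_mul_Emat]
  have h3' : (1 + etaT b) * (1 - etaT b) = 1 := by
    have e : (1 + etaT b) * (1 - etaT b) = 1 - etaT b * etaT b := by noncomm_ring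
    rw [e, h_tb_tb, sub_zero]
  have h3 : (etaT ((1 - b)⁻¹))⁻¹ = 1 - etaT b := by
    rw [hT]
    exact Matrix.inv_eq_right_inv h3'
  refine ⟨h1, h2, h3, ?_⟩
  rw [h3, h2]
  have e1 : (1 + b) * (1 - etaT b) = 1 + b - etaT b := by
    have e : (1 + b) * (1 - etaT b) = 1 + b - etaT b - b * etaT b := by noncomm_ring
    rw [e, h_b_tb, sub_zero]
  have e2 : (1 - etaT b) * (1 + b) = 1 + b - etaT b := by
    have e : (1 - etaT b) * (1 + b) = 1 + b - etaT b - etaT b * b := by noncomm_ring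
    rw [e, h_tb_b, sub_zero]
  rw [e1, e2, ← two_smul ℝ (1 + b - etaT b), smul_smul]
  norm_num
end
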